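/- Let G be a finite DAG, S ⊆ V a prefix subset, and D_S := { w ∈ S̄ : ∃ u ∈ V, v ∈ S̄ with u,v d-separated given S and u,v d-connected given S ∪ {w} }. Then D_S is descendant-closed within S̄: if w ∈ D_S and x ∈ Des[w], then x ∈ D_S. -/

import Mathlib

open Relation

/-- Undirected adjacency induced by a directed edge relation. -/
def Adjacent {V : Type*} (E : V → V → Prop) (a b : V) : Prop := E a b ∨ E b a

/-- `x` is a collider on the path (vertex list) `p`: both neighboring edges point into `x`. -/
def IsCollider {V : Type*} (E : V → V → Prop) (p : List V) (x : V) : Prop :=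
  ∃ l1 a b l2, p = l1 ++ a :: x :: b :: l2 ∧ E a x ∧ E b x

/-- A path (vertex list) is active given a conditioning set `C`:
every collider is in `C` or has a descendant in `C`, and no non-collider is in `C`. -/
def ActivePath {V : Type*} (E : V → V → Prop) (C : Set V) (p : List V) : Prop :=
  (∀ x ∈ p, IsCollider E p x → ∃ d, ReflTransGen E x d ∧ d ∈ C) ∧
  (∀ x ∈ p, ¬ IsCollider E p x → x ∉ C)

/-- `p` is a path between `u` and `v`: consecutively adjacent, distinct vertices. -/
def IsPathBetween {V : Type*} (E : V → V → Prop) (u v : V) (p : List V) : Prop :=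
  p.Chain' (Adjacent E) ∧ p.Nodup ∧ p.head? = some u ∧ p.getLast? = some v

/-- `u` and `v` are d-connected given `C`. -/
def DConn {V : Type*} (E : V → V → Prop) (C : Set V) (u v : V) : Prop :=
  ∃ p, IsPathBetween E u v p ∧ ActivePath E C p

/-- `u` and `v` are d-separated given `C`. -/
def DSep {V : Type*} (E : V → V → Prop) (C : Set V) (u v : V) : Prop :=
  ¬ DConn E C u v

/-- `S` is a prefix (ancestrally closed) subset. -/
def IsPrefixSet {V : Type*} (E : V → V → Prop) (S : Set V) : Prop :=
  ∀ u v, E u v → v ∈ S → u ∈ S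

/-- Source vertices of the induced subgraph on `T`: vertices of `T` with no parent in `T`. -/
def srcOf {V : Type*} (E : V → V → Prop) (T : Set V) : Set V :=
  {v | v ∈ T ∧ ∀ u, E u v → u ∉ T}

/-- The edge relation is acyclic. -/
def Acyclic {V : Type*} (E : V → V → Prop) : Prop :=
  ∀ v, ¬ TransGen E v v

/-- `p` is a directed path from `u` to `v` (all edges forward). -/
def DirPath {V : Type*} (E : V → V → Prop) (u v : V) (p : List V) : Prop :=
  p.Chain' E ∧ p.head? = some u ∧ p.getLast? = some v

/-- The type-I set `D_S`: vertices `w ∈ S̄` whose conditioning creates a new d-connection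
between some `u ∈ V` and `v ∈ S̄` that were d-separated given `S`. -/
def TypeIset {V : Type*} (E : V → V → Prop) (S : Set V) : Set V :=
  {w | w ∉ S ∧ ∃ u v : V, v ∉ S ∧ DSep E S u v ∧ DConn E (S ∪ {w}) u v}

/-!
Let `A` be the set of ancestors of `x` outside `S`. An active path `p` between `u` and `v`
given `S ∪ {w}` that is blocked given `S` must pass through `A`, and each vertex of `p` outside
`A` already satisfies the activity condition given `S`. Following `p` from `u` up to its first
vertex in `A` and then a directed path inside `A` down to `x` gives a path `σ` from `u` to `x`
that is active given `S`; the same from `v` gives `τ`. Splicing `σ` and `τ` at the first vertex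
`y` of `σ` on `τ` yields a path from `u` to `v` on which only `y ∈ A` can fail to be active given
`S`: as a non-collider it does not, contradicting the d-separation, and as a collider it makes
the path active given `S ∪ {x}`.
-/

section
variable {V : Type*} {E : V → V → Prop}

theorem List.exists_eq_append_cons_of_exists_mem {P : V → Prop} {l : List V} (h : ∃ z ∈ l, P z) :
    ∃ l₁ y l₂, l = l₁ ++ y :: l₂ ∧ P y ∧ ∀ z ∈ l₁, ¬ P z := by
  classical
  obtain ⟨y, hy⟩ := Option.isSome_iff_exists.mp
    (List.find?_isSome (p := fun z => decide (P z)) |>.mpr (by simpa using h))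
  obtain ⟨hPy, l₁, l₂, rfl, hl₁⟩ := List.find?_eq_some_iff_append.mp hy
  exact ⟨l₁, y, l₂, rfl, by simpa using hPy, fun z hz => by simpa using hl₁ z hz⟩

theorem isCollider_iff_getElem {p : List V} {z : V} :
    IsCollider E p z ↔
      ∃ i, ∃ h : i + 2 < p.length, p[i + 1] = z ∧ E p[i] z ∧ E p[i + 2] z := by
  constructor
  · rintro ⟨l₁, a, b, l₂, rfl, ha, hb⟩
    exact ⟨l₁.length, by simp, by simp, by simpa using ha, by simpa using hb⟩
  · rintro ⟨i, hi, rfl, ha, hb⟩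
    refine ⟨p.take i, p[i], p[i + 2], p.drop (i + 3), ?_, ha, hb⟩
    have h := List.take_append_drop i p
    rw [List.drop_eq_getElem_cons (i := i), List.drop_eq_getElem_cons (i := i + 1),
      List.drop_eq_getElem_cons (i := i + 2)] at h
    exact h.symm

theorem isCollider_reverse {p : List V} {z : V} :
    IsCollider E p.reverse z ↔ IsCollider E p z := by
  suffices ∀ q : List V, IsCollider E q z → IsCollider E q.reverse z from
    ⟨fun h => p.reverse_reverse ▸ this _ h, this p⟩
  rintro q ⟨l₁, a, b, l₂, rfl, ha, hb⟩
  exact ⟨l₂.reverse, b, a, l₁.reverse, by simp, hb, ha⟩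

theorem IsCollider.append_cons {A B B' : List V} {y z : V} (hnd : (A ++ y :: B).Nodup)
    (hz : z ∈ A) (h : IsCollider E (A ++ y :: B) z) : IsCollider E (A ++ y :: B') z := by
  obtain ⟨i, hi, hiz, ha, hb⟩ := isCollider_iff_getElem.mp h
  obtain ⟨k, hk, rfl⟩ := List.mem_iff_getElem.mp hz
  have hik : i + 1 = k := by
    rw [← hnd.getElem_inj_iff (hi := by omega) (hj := by simp; omega), hiz,
      List.getElem_append_left]
  have heq : ∀ j (hj : j ≤ A.length), (A ++ y :: B)[j]'(by simp; omega) =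
      (A ++ y :: B')[j]'(by simp; omega) := by
    intro j hj
    rcases hj.lt_or_eq with hj | rfl
    · simp [List.getElem_append_left hj]
    · simp
  refine isCollider_iff_getElem.mpr ⟨i, by simp; omega, ?_, ?_, ?_⟩
  · rw [← heq _ (by omega), hiz]
  · rwa [← heq _ (by omega)]
  · rwa [← heq _ (by omega)]

theorem Acyclic.nodup_of_isChain (hacyc : Acyclic E) {l : List V} (h : l.IsChain E) :
    l.Nodup :=
  (h.imp fun _ _ => TransGen.single).pairwise.imp fun {a _} hab => by rintro rfl; exact hacyc a hab

theorem Acyclic.not_isCollider_append_of_isChain (hacyc : Acyclic E) {A B : List V} {z : V}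
    (hnd : (A ++ B).Nodup) (hB : B.IsChain E) (hz : z ∈ B) : ¬ IsCollider E (A ++ B) z := by
  intro h
  obtain ⟨i, hi, hiz, -, hb⟩ := isCollider_iff_getElem.mp h
  obtain ⟨k, hk, rfl⟩ := List.mem_iff_getElem.mp hz
  have hik : i + 1 = A.length + k := by
    rw [← hnd.getElem_inj_iff (hi := by omega) (hj := by simp; omega), hiz,
      List.getElem_append_right (by omega)]
    simp
  have hnext : E B[k] (A ++ B)[i + 2] := by
    rw [List.getElem_append_right (by omega)]
    simpa [show i + 2 - A.length = k + 1 by omega] using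
      List.isChain_iff_getElem.mp hB k (by simp at hi; omega)
  exact hacyc _ (TransGen.tail (TransGen.single hnext) hb)

def ancestors (E : V → V → Prop) (x : V) : Set V := {z | ReflTransGen E z x}

theorem IsPrefixSet.mem_of_reflTransGen {S : Set V} (hS : IsPrefixSet E S) {a b : V}
    (h : ReflTransGen E a b) (hb : b ∈ S) : a ∈ S := by
  induction h using ReflTransGen.head_induction_on with
  | refl => exact hb
  | head hab _ ih => exact hS _ _ hab ih

theorem IsPathBetween.reverse {u v : V} {p : List V} (h : IsPathBetween E u v p) :
    IsPathBetween E v u p.reverse := by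
  obtain ⟨hch, hnd, hhd, hlst⟩ := h
  exact ⟨List.isChain_reverse.mpr (hch.imp fun _ _ => Or.symm), List.nodup_reverse.mpr hnd,
    by rwa [List.head?_reverse], by rwa [List.getLast?_reverse]⟩

def ActiveAt (E : V → V → Prop) (C : Set V) (p : List V) (z : V) : Prop :=
  (IsCollider E p z → ∃ d, ReflTransGen E z d ∧ d ∈ C) ∧ (¬ IsCollider E p z → z ∉ C)

theorem activePath_iff {C : Set V} {p : List V} :
    ActivePath E C p ↔ ∀ z ∈ p, ActiveAt E C p z :=
  ⟨fun h z hz => ⟨h.1 z hz, h.2 z hz⟩, fun h => ⟨fun z hz => (h z hz).1, fun z hz => (h z hz).2⟩⟩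

theorem activeAt_reverse {C : Set V} {p : List V} {z : V} :
    ActiveAt E C p.reverse z ↔ ActiveAt E C p z := by
  simp only [ActiveAt, isCollider_reverse]

theorem activeAt_append_cons_iff {C : Set V} {A B B' : List V} {y z : V}
    (hnd : (A ++ y :: B).Nodup) (hnd' : (A ++ y :: B').Nodup) (hz : z ∈ A) :
    ActiveAt E C (A ++ y :: B) z ↔ ActiveAt E C (A ++ y :: B') z := by
  simp only [ActiveAt, propext ⟨IsCollider.append_cons hnd hz, IsCollider.append_cons hnd' hz⟩]

theorem ActiveAt.of_union_singleton {C : Set V} {p : List V} {z w x : V}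
    (h : ActiveAt E (C ∪ {w}) p z) (hwx : ReflTransGen E w x)
    (hz : z ∉ ancestors E x \ C) : ActiveAt E C p z := by
  refine ⟨fun hc => ?_, fun hc hzC => h.2 hc (Or.inl hzC)⟩
  obtain ⟨d, hzd, hd | rfl⟩ := h.1 hc
  · exact ⟨d, hzd, hd⟩
  · exact ⟨z, .refl, by_contra fun hzC => hz ⟨hzd.trans hwx, hzC⟩⟩

theorem ActiveAt.union_singleton {C : Set V} {p : List V} {z x : V} (h : ActiveAt E C p z)
    (hzx : z ≠ x) : ActiveAt E (C ∪ {x}) p z :=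
  ⟨fun hc => (h.1 hc).imp fun _ hd => ⟨hd.1, Or.inl hd.2⟩,
    fun hc hz => hz.elim (h.2 hc) hzx⟩

theorem IsPrefixSet.exists_isChain_ancestors_diff {S : Set V} (hS : IsPrefixSet E S) {c x : V}
    (hc : c ∈ ancestors E x \ S) :
    ∃ α, (c :: α).IsChain E ∧ (c :: α).getLast? = some x ∧
      ∀ z ∈ c :: α, z ∈ ancestors E x \ S := by
  obtain ⟨α, hch, hlast⟩ := List.exists_isChain_cons_of_relationReflTransGen hc.1
  refine ⟨α, hch, by rw [List.getLast?_eq_some_getLast (List.cons_ne_nil _ _), hlast],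
    fun z hz => ⟨?_, ?_⟩⟩
  · exact hch.backwards_cons_induction (ancestors E x) α hlast (fun _ _ => ReflTransGen.head)
      .refl z hz
  · exact hch.induction (· ∉ S) _ (fun a b hab ha hb => ha (hS a b hab hb)) (fun _ => hc.2) z hz

theorem IsPathBetween.append_isChain (hacyc : Acyclic E) {p₁ p₂ α : List V} {u v c x : V}
    (hp : IsPathBetween E u v (p₁ ++ c :: p₂)) (hch : (c :: α).IsChain E)
    (hlast : (c :: α).getLast? = some x) (hdisj : ∀ z ∈ p₁, z ∉ c :: α) :
    IsPathBetween E u x (p₁ ++ c :: α) := by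
  obtain ⟨hpch, hpnd, hhd, -⟩ := hp
  refine ⟨?_, ?_, by cases p₁ <;> simpa using hhd, by simpa using hlast⟩
  · show (p₁ ++ c :: α).IsChain (Adjacent E)
    have h₁ : (p₁ ++ [c]).IsChain (Adjacent E) := List.IsChain.infix hpch ⟨[], p₂, by simp⟩
    simpa using h₁.append_overlap (hch.imp fun _ _ => Or.inl) (List.cons_ne_nil _ _)
  · exact List.nodup_append.mpr ⟨(List.nodup_append.mp hpnd).1, hacyc.nodup_of_isChain hch,
      fun a ha b hb hab => hdisj a ha (hab ▸ hb)⟩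

theorem activePath_append_isChain (hacyc : Acyclic E) {C : Set V} {p₁ p₂ α : List V} {c : V}
    (hnd : (p₁ ++ c :: p₂).Nodup) (hnd' : (p₁ ++ c :: α).Nodup) (hch : (c :: α).IsChain E)
    (hact : ∀ z ∈ p₁, ActiveAt E C (p₁ ++ c :: p₂) z) (hC : ∀ z ∈ c :: α, z ∉ C) :
    ActivePath E C (p₁ ++ c :: α) := by
  refine activePath_iff.mpr fun z hz => ?_
  rcases List.mem_append.mp hz with hz | hz
  · exact (activeAt_append_cons_iff hnd hnd' hz).mp (hact z hz)
  · exact ⟨fun hc => absurd hc (hacyc.not_isCollider_append_of_isChain hnd' hch hz),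
      fun _ => hC z hz⟩

theorem exists_activePath_of_eq_append_cons (hacyc : Acyclic E) {S : Set V}
    (hS : IsPrefixSet E S) {p₁ p₂ : List V} {u v c x : V}
    (hp : IsPathBetween E u v (p₁ ++ c :: p₂)) (hact : ∀ z ∈ p₁, ActiveAt E S (p₁ ++ c :: p₂) z)
    (hc : c ∈ ancestors E x \ S) (hp₁ : ∀ z ∈ p₁, z ∉ ancestors E x \ S) :
    ∃ σ, IsPathBetween E u x σ ∧ ActivePath E S σ ∧
      ∀ z ∈ σ, z ∈ p₁ ∨ z ∈ ancestors E x \ S := by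
  obtain ⟨α, hch, hlast, hαA⟩ := hS.exists_isChain_ancestors_diff hc
  have hσ := hp.append_isChain hacyc hch hlast fun z hz hzα => hp₁ z hz (hαA z hzα)
  refine ⟨_, hσ, activePath_append_isChain hacyc hp.2.1 hσ.2.1 hch hact fun z hz => (hαA z hz).2,
    fun z hz => ?_⟩
  rcases List.mem_append.mp hz with h | h
  exacts [Or.inl h, Or.inr (hαA z h)]

theorem exists_activePaths_meeting_in_ancestors (hacyc : Acyclic E) {S : Set V}
    (hS : IsPrefixSet E S) {p : List V} {u v x : V} (hp : IsPathBetween E u v p)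
    (hact : ∀ z ∈ p, z ∉ ancestors E x \ S → ActiveAt E S p z)
    (hA : ∃ z ∈ p, z ∈ ancestors E x \ S) :
    ∃ σ τ, IsPathBetween E u x σ ∧ ActivePath E S σ ∧ IsPathBetween E v x τ ∧
      ActivePath E S τ ∧ ∀ z ∈ σ, z ∈ τ → z ∈ ancestors E x \ S := by
  obtain ⟨p₁, c, p₂, rfl, hc, hp₁⟩ := List.exists_eq_append_cons_of_exists_mem hA
  obtain ⟨q₁, c', q₂, hq, hc', hq₁⟩ :=
    List.exists_eq_append_cons_of_exists_mem (l := (c :: p₂).reverse) ⟨c, by simp, hc⟩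
  have hrev : (p₁ ++ c :: p₂).reverse = q₁ ++ c' :: (q₂ ++ p₁.reverse) := by simp [hq]
  obtain ⟨σ, hσ, hσa, hσA⟩ := exists_activePath_of_eq_append_cons hacyc hS hp
    (fun z hz => hact z (by simp [hz]) (hp₁ z hz)) hc hp₁
  have hp' := hrev ▸ hp.reverse
  obtain ⟨τ, hτ, hτa, hτA⟩ := exists_activePath_of_eq_append_cons hacyc hS hp'
    (fun z hz => by
      rw [← hrev, activeAt_reverse]
      exact hact z (List.mem_reverse.mp (hrev ▸ by simp [hz])) (hq₁ z hz)) hc' hq₁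
  refine ⟨σ, τ, hσ, hσa, hτ, hτa, fun z hzσ hzτ => ?_⟩
  rcases hσA z hzσ with hz₁ | h
  · rcases hτA z hzτ with hz₂ | h
    · exact absurd rfl ((List.nodup_append.mp hp'.2.1).2.2 z hz₂ z (by simp [hz₁]))
    · exact h
  · exact h

theorem IsPathBetween.splice {σ₁ σ₂ τ₁ τ₂ : List V} {u v x x' y : V}
    (hσ : IsPathBetween E u x (σ₁ ++ y :: σ₂)) (hτ : IsPathBetween E v x' (τ₁ ++ y :: τ₂))
    (hdisj : ∀ z ∈ σ₁, z ∉ τ₁ ++ y :: τ₂) : IsPathBetween E u v (σ₁ ++ y :: τ₁.reverse) := by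
  obtain ⟨hσch, hσnd, hσhd, -⟩ := hσ
  obtain ⟨hτch, hτnd, hτhd, -⟩ := hτ
  have hτ₁ : (τ₁ ++ [y]).IsChain (Adjacent E) := List.IsChain.infix hτch ⟨[], τ₂, by simp⟩
  have hrev : σ₁ ++ y :: τ₁.reverse = (τ₁ ++ y :: σ₁.reverse).reverse := by simp
  refine ⟨?_, ?_, by cases σ₁ <;> simpa using hσhd,
    by rw [hrev, List.getLast?_reverse]; cases τ₁ <;> simpa using hτhd⟩
  · show (σ₁ ++ y :: τ₁.reverse).IsChain (Adjacent E)
    have hσ₁ : (σ₁ ++ [y]).IsChain (Adjacent E) := List.IsChain.infix hσch ⟨[], σ₂, by simp⟩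
    have hτ₁' : ([y] ++ τ₁.reverse).IsChain (Adjacent E) := by
      simpa using (List.isChain_reverse (R := Adjacent E)).mpr (hτ₁.imp fun _ _ => Or.symm)
    simpa using hσ₁.append_overlap hτ₁' (List.cons_ne_nil _ _)
  · refine List.nodup_append.mpr ⟨(List.nodup_append.mp hσnd).1, ?_, ?_⟩
    · simpa using List.nodup_reverse.mpr (hτnd.sublist (l₁ := τ₁ ++ [y]) (by simp))
    · rintro a ha b hb rfl
      simp only [List.mem_cons, List.mem_reverse] at hb
      exact hdisj a ha (by simp; tauto)

theorem ActivePath.activeAt_splice {C : Set V} {σ₁ σ₂ τ₁ τ₂ : List V} {y z : V}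
    (hσa : ActivePath E C (σ₁ ++ y :: σ₂)) (hτa : ActivePath E C (τ₁ ++ y :: τ₂))
    (hσ : (σ₁ ++ y :: σ₂).Nodup) (hτ : (τ₁ ++ y :: τ₂).Nodup)
    (hρ : (σ₁ ++ y :: τ₁.reverse).Nodup) (hz : z ∈ σ₁ ++ τ₁) :
    ActiveAt E C (σ₁ ++ y :: τ₁.reverse) z := by
  rcases List.mem_append.mp hz with hz | hz
  · exact (activeAt_append_cons_iff hσ hρ hz).mp (activePath_iff.mp hσa z (by simp [hz]))
  · have hrev : (σ₁ ++ y :: τ₁.reverse).reverse = τ₁ ++ y :: σ₁.reverse := by simp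
    rw [← activeAt_reverse, hrev]
    exact (activeAt_append_cons_iff hτ (hrev ▸ List.nodup_reverse.mpr hρ) hz).mp
      (activePath_iff.mp hτa z (by simp [hz]))

theorem dConn_or_dConn_union_singleton {S : Set V} {σ τ : List V} {u v x : V}
    (hσ : IsPathBetween E u x σ) (hτ : IsPathBetween E v x τ)
    (hσa : ActivePath E S σ) (hτa : ActivePath E S τ)
    (hmeet : ∀ z ∈ σ, z ∈ τ → z ∈ ancestors E x \ S) :
    DConn E S u v ∨ DConn E (S ∪ {x}) u v := by
  have hxτ : x ∈ τ := List.mem_of_getLast? hτ.2.2.2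
  obtain ⟨σ₁, y, σ₂, rfl, hyτ, hσ₁⟩ :=
    List.exists_eq_append_cons_of_exists_mem ⟨x, List.mem_of_getLast? hσ.2.2.2, hxτ⟩
  obtain ⟨τ₁, τ₂, rfl⟩ := List.append_of_mem hyτ
  have hρ := hσ.splice hτ hσ₁
  have hρa := fun z (hz : z ∈ σ₁ ++ τ₁) => hσa.activeAt_splice hτa hσ.2.1 hτ.2.1 hρ.2.1 hz
  have hmem : ∀ z ∈ σ₁ ++ y :: τ₁.reverse, z = y ∨ z ∈ σ₁ ++ τ₁ := by
    intro z hz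
    simp only [List.mem_append, List.mem_cons, List.mem_reverse] at hz ⊢
    tauto
  obtain ⟨hyx, hyS⟩ := hmeet y (by simp) hyτ
  by_cases hy : IsCollider E (σ₁ ++ y :: τ₁.reverse) y
  · have hxτ₂ : x ∈ y :: τ₂ := List.mem_of_getLast? (by simpa using hτ.2.2.2)
    have hx : x ∉ σ₁ ++ τ₁ := by
      simp only [List.mem_append, not_or]
      exact ⟨fun h => hσ₁ x h hxτ, fun h => (List.nodup_append.mp hτ.2.1).2.2 x h x hxτ₂ rfl⟩
    refine Or.inr ⟨_, hρ, activePath_iff.mpr fun z hz => ?_⟩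
    rcases hmem z hz with rfl | hz
    · exact ⟨fun _ => ⟨x, hyx, Or.inr rfl⟩, fun h => absurd hy h⟩
    · exact (hρa z hz).union_singleton (ne_of_mem_of_not_mem hz hx)
  · refine Or.inl ⟨_, hρ, activePath_iff.mpr fun z hz => ?_⟩
    rcases hmem z hz with rfl | hz
    · exact ⟨fun h => absurd h hy, fun _ => hyS⟩
    · exact hρa z hz

end

theorem typeIset_descendant_closed_general {V : Type*} (E : V → V → Prop)
    (hacyc : Acyclic E) (S : Set V) (hS : IsPrefixSet E S)
    (w x : V) (hw : w ∈ TypeIset E S) (hx : ReflTransGen E w x) :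
    x ∈ TypeIset E S := by
  obtain ⟨hwS, u, v, hvS, hsep, p, hp, hact⟩ := hw
  have hpS : ∀ z ∈ p, z ∉ ancestors E x \ S → ActiveAt E S p z := fun z hz =>
    (activePath_iff.mp hact z hz).of_union_singleton hx
  have hpA : ∃ z ∈ p, z ∈ ancestors E x \ S := by
    by_contra! h
    exact hsep ⟨p, hp, activePath_iff.mpr fun z hz => hpS z hz (h z hz)⟩
  obtain ⟨σ, τ, hσ, hσa, hτ, hτa, hmeet⟩ :=
    exists_activePaths_meeting_in_ancestors hacyc hS hp hpS hpA
  refine ⟨fun hxS => hwS (hS.mem_of_reflTransGen hx hxS), u, v, hvS, hsep, ?_⟩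
  exact (dConn_or_dConn_union_singleton hσ hτ hσa hτa hmeet).resolve_left hsep

/-- `D_S` is descendant-closed: if `w ∈ D_S` and `x ∈ Des[w]` then `x ∈ D_S`. -/
theorem typeIset_descendant_closed {V : Type*} [Fintype V] (E : V → V → Prop)
    (hacyc : Acyclic E) (S : Set V) (hS : IsPrefixSet E S)
    (w x : V) (hw : w ∈ TypeIset E S) (hx : ReflTransGen E w x) :
    x ∈ TypeIset E S :=
  typeIset_descendant_closed_general E hacyc S hS w x hw hx
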